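/- There exist 9 points in (ℤ/61ℤ)², pairwise at integral distance, such that no three are collinear and no four are situated on a circle (in the ℤ/61ℤ sense). -/

import Mathlib

/-- Two points of `(ℤ/nℤ)²` are at integral distance. -/
def IntegralDist {n : ℕ} (u v : ZMod n × ZMod n) : Prop :=
  ∃ d : ZMod n, (u.1 - v.1) ^ 2 + (u.2 - v.2) ^ 2 = d ^ 2

/-- Three points of `(ℤ/nℤ)²` are collinear. -/
def ZCollinear {n : ℕ} (p₁ p₂ p₃ : ZMod n × ZMod n) : Prop :=
  ∃ a b t₁ t₂ : ZMod n, ∃ w : Fin 3 → ZMod n,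
    ∀ i : Fin 3, a + w i * t₁ = (![p₁, p₂, p₃] i).1 ∧ b + w i * t₂ = (![p₁, p₂, p₃] i).2

/-- Four points of `(ℤ/nℤ)²` are situated on a circle. -/
def ZOnCircle {n : ℕ} (p₁ p₂ p₃ p₄ : ZMod n × ZMod n) : Prop :=
  ∃ a b r : ZMod n, r ≠ 0 ∧
    ∀ i : Fin 4, ((![p₁, p₂, p₃, p₄] i).1 - a) ^ 2 + ((![p₁, p₂, p₃, p₄] i).2 - b) ^ 2 = r ^ 2

/-! An explicit configuration works. Collinear points make a 3 × 3 determinant vanish and concyclic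
points a 4 × 4 one, so for a given configuration every property is a finite computation in
`ZMod 61`: all these determinants are nonzero and all squared distances are squares. -/

def triangleDet {n : ℕ} (p q s : ZMod n × ZMod n) : ZMod n :=
  (q.1 - p.1) * (s.2 - p.2) - (s.1 - p.1) * (q.2 - p.2)

lemma ZCollinear.triangleDet_eq_zero {n : ℕ} {p₁ p₂ p₃ : ZMod n × ZMod n}
    (h : ZCollinear p₁ p₂ p₃) : triangleDet p₁ p₂ p₃ = 0 := by
  obtain ⟨a, b, t₁, t₂, w, hw⟩ := h
  obtain ⟨h₁x, h₁y⟩ := hw 0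
  obtain ⟨h₂x, h₂y⟩ := hw 1
  obtain ⟨h₃x, h₃y⟩ := hw 2
  simp only [Matrix.cons_val_zero, Matrix.cons_val_one, Matrix.cons_val_two, Matrix.head_cons,
    Matrix.tail_cons] at h₁x h₁y h₂x h₂y h₃x h₃y
  rw [triangleDet, ← h₁x, ← h₁y, ← h₂x, ← h₂y, ← h₃x, ← h₃y]
  ring

/-- Expansion along the last column of the determinant with rows `(xᵢ, yᵢ, 1, xᵢ² + yᵢ²)`. -/
def circleDet {n : ℕ} (p₁ p₂ p₃ p₄ : ZMod n × ZMod n) : ZMod n :=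
  triangleDet p₂ p₃ p₄ * (p₁.1 ^ 2 + p₁.2 ^ 2) - triangleDet p₁ p₃ p₄ * (p₂.1 ^ 2 + p₂.2 ^ 2)
    + triangleDet p₁ p₂ p₄ * (p₃.1 ^ 2 + p₃.2 ^ 2) - triangleDet p₁ p₂ p₃ * (p₄.1 ^ 2 + p₄.2 ^ 2)

lemma ZOnCircle.circleDet_eq_zero {n : ℕ} {p₁ p₂ p₃ p₄ : ZMod n × ZMod n}
    (h : ZOnCircle p₁ p₂ p₃ p₄) : circleDet p₁ p₂ p₃ p₄ = 0 := by
  obtain ⟨a, b, r, -, hr⟩ := h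
  have h₁ := hr 0
  have h₂ := hr 1
  have h₃ := hr 2
  have h₄ := hr 3
  simp only [Matrix.cons_val_zero, Matrix.cons_val_one, Matrix.cons_val_two,
    Matrix.cons_val_three, Matrix.head_cons, Matrix.tail_cons] at h₁ h₂ h₃ h₄
  -- the circle equations differ from `xᵢ² + yᵢ²` by an affine function of the point,
  -- which the alternating sum of the triangle determinants annihilates
  linear_combination (norm := (simp only [circleDet, triangleDet]; ring1))
    triangleDet p₂ p₃ p₄ * h₁ - triangleDet p₁ p₃ p₄ * h₂
      + triangleDet p₁ p₂ p₄ * h₃ - triangleDet p₁ p₂ p₃ * h₄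

def ninePoints : Fin 9 → ZMod 61 × ZMod 61 :=
  ![(14, 35), (49, 7), (22, 51), (58, 51), (57, 1), (40, 7), (15, 14), (58, 44), (57, 13)]

lemma ninePoints_injective : Function.Injective ninePoints := by
  decide

lemma integralDist_ninePoints (i j : Fin 9) : IntegralDist (ninePoints i) (ninePoints j) := by
  revert i j
  unfold IntegralDist
  decide

lemma triangleDet_ninePoints_ne_zero : ∀ i j k : Fin 9, i ≠ j → i ≠ k → j ≠ k →
    triangleDet (ninePoints i) (ninePoints j) (ninePoints k) ≠ 0 := by
  decide

lemma circleDet_ninePoints_ne_zero : ∀ i j k l : Fin 9,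
    i ≠ j → i ≠ k → i ≠ l → j ≠ k → j ≠ l → k ≠ l →
    circleDet (ninePoints i) (ninePoints j) (ninePoints k) (ninePoints l) ≠ 0 := by
  decide

theorem exists_integral_9_points_zmod61 :
    ∃ P : Fin 9 → ZMod 61 × ZMod 61,
      Function.Injective P ∧
      (∀ i j : Fin 9, IntegralDist (P i) (P j)) ∧
      (∀ i j k : Fin 9, i ≠ j → i ≠ k → j ≠ k → ¬ ZCollinear (P i) (P j) (P k)) ∧
      (∀ i j k l : Fin 9, i ≠ j → i ≠ k → i ≠ l → j ≠ k → j ≠ l → k ≠ l →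
        ¬ ZOnCircle (P i) (P j) (P k) (P l)) :=
  ⟨ninePoints, ninePoints_injective, integralDist_ninePoints,
    fun i j k hij hik hjk h ↦ triangleDet_ninePoints_ne_zero i j k hij hik hjk h.triangleDet_eq_zero,
    fun i j k l hij hik hil hjk hjl hkl h ↦
      circleDet_ninePoints_ne_zero i j k l hij hik hil hjk hjl hkl h.circleDet_eq_zero⟩
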